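/- Let F be a finite field of order q, let d be an invertible exponent over F, and let k be a positive integer. Let b_1, …, b_k be nonzero elements of F, and let N_{b_1,…,b_k} be the number of k-tuples (x_1,…,x_k) ∈ F^k satisfying both b_1·x_1 + ⋯ + b_k·x_k = 0 and x_1^d + ⋯ + x_k^d = 0. Then Σ_{a ∈ F, a ≠ 0} Π_{j=1}^{k} W_{F,d}(b_j·a) = (q²·N_{b_1,…,b_k} − q^k)/(q − 1). -/

import Mathlib

/-!
Write `S x = ∑ⱼ xⱼ ^ d` and `T x = ∑ⱼ bⱼ xⱼ` on `F^k`. Expanding the product gives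
`∏ⱼ W(bⱼ a) = ∑ₓ ψ(S x - a T x)`, so orthogonality of `ψ` turns the sum over all `a ∈ F` into
`q A` with `A = ∑_{T x = 0} ψ(S x)`; the term `a = 0` vanishes because `x ↦ x ^ d` permutes `F`,
whence `W(0) = ∑ ψ = 0`. Orthogonality in a second variable `c` gives
`q N = ∑_c ∑_{T x = 0} ψ(c S x)`. Every `c ≠ 0` is a `d`-th power `u ^ d`, and `x ↦ u x`
preserves the hyperplane `T = 0` while `S (u x) = u ^ d S x`, so each inner sum with `c ≠ 0`
equals `A`. As the hyperplane has `q ^ (k - 1)` points, `q N = q ^ (k - 1) + (q - 1) A`, and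
eliminating `A` gives the identity.
-/

open scoped BigOperators

/-- The canonical additive character of a finite field `F` of characteristic `p`:
`ψ(x) = exp(2πi·Tr(x)/p)`, where `Tr` is the absolute trace from `F` to `𝔽_p = ZMod p`. -/
noncomputable def canonicalPsi (F : Type*) [Field F] [Fintype F] (p : ℕ) [CharP F p]
    (x : F) : ℂ :=
  letI : Algebra (ZMod p) F := ZMod.algebra F p
  Complex.exp (2 * Real.pi * Complex.I * ((Algebra.trace (ZMod p) F x).val : ℂ) / (p : ℂ))

/-- The Weil sum `W_{F,d}(a) = ∑_{x ∈ F} ψ(x^d − a·x)`. -/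
noncomputable def weilSum (F : Type*) [Field F] [Fintype F] (p : ℕ) [CharP F p]
    (d : ℕ) (a : F) : ℂ :=
  ∑ x : F, canonicalPsi F p (x ^ d - a * x)

open Finset

namespace AddChar

theorem map_sum_eq_prod {A M ι : Type*} [AddCommMonoid A] [CommMonoid M] (ψ : AddChar A M)
    (s : Finset ι) (f : ι → A) : ψ (∑ i ∈ s, f i) = ∏ i ∈ s, ψ (f i) := by
  classical
  induction s using Finset.induction_on with
  | empty => simp
  | insert i s hi ih => rw [sum_insert hi, prod_insert hi, map_add_eq_mul, ih]

theorem prod_sum_eq_sum_pi {A R ι : Type*} [AddCommMonoid A] [Fintype A] [CommRing R]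
    [Fintype ι] [DecidableEq ι] (ψ : AddChar A R) (g : ι → A → A) :
    ∏ i, ∑ y, ψ (g i y) = ∑ x : ι → A, ψ (∑ i, g i (x i)) := by
  simp only [Fintype.prod_sum, map_sum_eq_prod]

variable {F R ι : Type*} [Field F] [Fintype F] [DecidableEq F] [CommRing R] [IsDomain R]
  {ψ : AddChar F R}

theorem sum_sum_mul_add (hψ : ψ.IsPrimitive) (s : Finset ι) (T S : ι → F) :
    ∑ a, ∑ x ∈ s, ψ (a * T x + S x) = Fintype.card F * ∑ x ∈ s with T x = 0, ψ (S x) := by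
  rw [sum_comm, sum_filter, mul_sum]
  refine sum_congr rfl fun x _ => ?_
  simp_rw [map_add_eq_mul, ← sum_mul, sum_mulShift _ hψ]
  split_ifs <;> simp

theorem sum_sum_mul (hψ : ψ.IsPrimitive) (s : Finset ι) (f : ι → F) :
    ∑ a, ∑ x ∈ s, ψ (a * f x) = Fintype.card F * #{x ∈ s | f x = 0} := by
  simpa using sum_sum_mul_add hψ s f 0

end AddChar

theorem FiniteField.units_pow_surjective {F : Type*} [Field F] [Fintype F] {d : ℕ}
    (h : d.Coprime (Fintype.card F - 1)) : Function.Surjective fun u : Fˣ => u ^ d := by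
  refine (Nat.Coprime.pow_left_bijective ?_).surjective
  rw [Nat.card_units, Nat.card_eq_fintype_card]
  exact h.symm

theorem FiniteField.pow_bijective {F : Type*} [Field F] [Fintype F] {d : ℕ} (hd : d ≠ 0)
    (h : d.Coprime (Fintype.card F - 1)) : Function.Bijective fun x : F => x ^ d := by
  refine Finite.surjective_iff_bijective.mp fun c => ?_
  rcases eq_or_ne c 0 with rfl | hc
  · exact ⟨0, zero_pow hd⟩
  · obtain ⟨u, hu⟩ := units_pow_surjective h (Units.mk0 c hc)
    exact ⟨u, by simpa using congrArg Units.val hu⟩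

theorem card_eq_card_mul_card_filter_eq_zero {G M Fn : Type*} [AddGroup G] [Fintype G]
    [AddMonoid M] [Fintype M] [DecidableEq M] [FunLike Fn G M] [AddMonoidHomClass Fn G M]
    (f : Fn) (hf : Function.Surjective f) :
    Fintype.card G = Fintype.card M * #{x | f x = 0} := by
  rw [← card_univ, card_eq_sum_card_fiberwise (f := f) (t := univ) fun x _ => mem_univ _,
    sum_congr rfl fun y _ => AddMonoidHom.card_fiber_eq_of_mem_range f (hf y) ⟨0, map_zero f⟩,
    sum_const, card_univ, smul_eq_mul]

section Homogeneous

variable {F V : Type*} [Field F] [DecidableEq F] [AddCommGroup V] [Module F V] [Fintype V]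
  {S : V → F} {d : ℕ}

theorem sum_ker_pow_mul_eq_of_homogeneous {M : Type*} [AddCommMonoid M] (T : V →ₗ[F] F)
    (hS : ∀ (u : F) x, S (u • x) = u ^ d * S x) (g : F → M) (u : Fˣ) :
    ∑ x with T x = 0, g ((u : F) ^ d * S x) = ∑ x with T x = 0, g (S x) := by
  rw [sum_filter, sum_filter]
  exact Fintype.sum_equiv (MulAction.toPerm u) _ _ fun x => by
    simp [Units.smul_def, hS, map_smul]

theorem card_mul_card_common_zeros [Fintype F] {R : Type*} [CommRing R] [IsDomain R]
    {ψ : AddChar F R} (hψ : ψ.IsPrimitive) (T : V →ₗ[F] F)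
    (hS : ∀ (u : F) x, S (u • x) = u ^ d * S x)
    (hpow : Function.Surjective fun u : Fˣ => u ^ d) :
    (Fintype.card F : R) * #{x | T x = 0 ∧ S x = 0} =
      #{x | T x = 0} + (Fintype.card F - 1) * ∑ x with T x = 0, ψ (S x) := by
  have hconst : ∀ c ∈ ({0}ᶜ : Finset F),
      ∑ x with T x = 0, ψ (c * S x) = ∑ x with T x = 0, ψ (S x) := by
    intro c hc
    obtain ⟨u, hu⟩ := hpow (Units.mk0 c (by simpa using hc))
    have hc : c = (u : F) ^ d := by simpa using (congrArg Units.val hu).symm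
    rw [hc]
    exact sum_ker_pow_mul_eq_of_homogeneous T hS ψ u
  have h := AddChar.sum_sum_mul hψ {x | T x = 0} S
  rw [Fintype.sum_eq_add_sum_compl 0, sum_congr rfl hconst, sum_const, card_compl,
    card_singleton, filter_filter] at h
  simp only [zero_mul, AddChar.map_zero_eq_one, sum_const, nsmul_eq_mul, mul_one] at h
  rw [← h, Nat.cast_sub Fintype.card_pos, Nat.cast_one]

end Homogeneous

section Canonical

variable (F : Type*) [Field F] [Fintype F] (p : ℕ) [Fact p.Prime] [CharP F p]

noncomputable def canonicalAddChar : AddChar F ℂ :=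
  letI : Algebra (ZMod p) F := ZMod.algebra F p
  ZMod.stdAddChar.compAddMonoidHom (Algebra.trace (ZMod p) F).toAddMonoidHom

theorem coe_canonicalAddChar : ⇑(canonicalAddChar F p) = canonicalPsi F p := by
  ext x
  rw [canonicalAddChar, AddChar.compAddMonoidHom_apply, ZMod.stdAddChar_apply,
    ZMod.toCircle_apply]
  rfl

theorem canonicalAddChar_ne_one : canonicalAddChar F p ≠ 1 := by
  let : Algebra (ZMod p) F := ZMod.algebra F p
  obtain ⟨x, hx⟩ := Algebra.trace_surjective (ZMod p) F 1
  refine AddChar.ne_one_iff.mpr ⟨x, ?_⟩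
  change ZMod.stdAddChar (Algebra.trace (ZMod p) F x) ≠ 1
  rw [hx, ← AddChar.map_zero_eq_one (ZMod.stdAddChar (N := p)), ZMod.injective_stdAddChar.ne_iff]
  exact one_ne_zero

theorem isPrimitive_canonicalAddChar : (canonicalAddChar F p).IsPrimitive :=
  .of_ne_one (canonicalAddChar_ne_one F p)

end Canonical

section WeilSum

variable {F : Type*} [Field F] [Fintype F] {p : ℕ} [Fact p.Prime] [CharP F p] {d : ℕ}

theorem weilSum_zero (hd : Function.Bijective fun x : F => x ^ d) : weilSum F p d 0 = 0 := by
  simp only [weilSum, zero_mul, sub_zero, ← coe_canonicalAddChar]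
  rw [hd.sum_comp (canonicalAddChar F p)]
  exact AddChar.sum_eq_zero_of_ne_one (canonicalAddChar_ne_one F p)

theorem sum_prod_weilSum [DecidableEq F] {ι : Type*} [Fintype ι] [DecidableEq ι] (b : ι → F) :
    ∑ a, ∏ j, weilSum F p d (b j * a) =
      Fintype.card F * ∑ x : ι → F with ∑ j, b j * x j = 0, canonicalPsi F p (∑ j, x j ^ d) := by
  simp only [weilSum, ← coe_canonicalAddChar, AddChar.prod_sum_eq_sum_pi]
  rw [← Equiv.sum_comp (Equiv.neg F),
    ← AddChar.sum_sum_mul_add (isPrimitive_canonicalAddChar F p)]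
  refine sum_congr rfl fun a _ => sum_congr rfl fun x _ => congrArg _ ?_
  rw [mul_sum, ← sum_add_distrib]
  exact sum_congr rfl fun j _ => by simp only [Equiv.neg_apply]; ring

end WeilSum

theorem weilSum_product_moment_general (F : Type*) [Field F] [Fintype F] [DecidableEq F]
    (p : ℕ) [CharP F p] (d : ℕ) (hd : 0 < d)
    (hgcd : Nat.gcd d (Fintype.card F - 1) = 1)
    (k : ℕ) (hk : 0 < k) (b : Fin k → F) (hb : ∀ j, b j ≠ 0) :
    ∑ a ∈ Finset.univ.filter (fun a : F => a ≠ 0), ∏ j, weilSum F p d (b j * a) =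
      ((Fintype.card F : ℂ) ^ 2 *
          (Set.ncard {x : Fin k → F | ∑ j, b j * x j = 0 ∧ ∑ j, x j ^ d = 0} : ℂ)
        - (Fintype.card F : ℂ) ^ k) / ((Fintype.card F : ℂ) - 1) := by
  have : Fact p.Prime := ⟨CharP.char_is_prime F p⟩
  let T : (Fin k → F) →ₗ[F] F := dotProductBilin F F b
  have hT : Function.Surjective T := fun t =>
    ⟨Pi.single ⟨0, hk⟩ (t / b ⟨0, hk⟩), by simp [T, dotProduct_single, mul_div_cancel₀ _ (hb _)]⟩
  have hS (u : F) (x : Fin k → F) : ∑ j, (u • x) j ^ d = u ^ d * ∑ j, x j ^ d := by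
    simp [mul_pow, mul_sum]
  have hzero : ∏ j, weilSum F p d (b j * 0) = 0 := by
    simp [weilSum_zero (FiniteField.pow_bijective hd.ne' hgcd), hk.ne']
  have hmoment : ∑ a ∈ univ.filter (fun a : F => a ≠ 0), ∏ j, weilSum F p d (b j * a) =
      Fintype.card F * ∑ x with T x = 0, canonicalAddChar F p (∑ j, x j ^ d) := by
    rw [sum_filter_of_ne fun a _ ha => by rintro rfl; exact ha hzero, sum_prod_weilSum,
      coe_canonicalAddChar]
    rfl
  have hzeros := card_mul_card_common_zeros (S := fun x : Fin k → F => ∑ j, x j ^ d)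
    (isPrimitive_canonicalAddChar F p) T hS (FiniteField.units_pow_surjective hgcd)
  have hker := card_eq_card_mul_card_filter_eq_zero T hT
  rw [Fintype.card_fun, Fintype.card_fin] at hker
  replace hker : (Fintype.card F : ℂ) ^ k = Fintype.card F * #{x | T x = 0} := mod_cast hker
  have hq : (Fintype.card F : ℂ) - 1 ≠ 0 :=
    sub_ne_zero.mpr (by exact_mod_cast Fintype.one_lt_card.ne')
  rw [Set.ncard_eq_toFinset_card', Set.toFinset_ofPred, eq_div_iff hq, hmoment]
  simp only [T, dotProductBilin_apply_apply, dotProduct] at hzeros hker ⊢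
  linear_combination -(Fintype.card F : ℂ) * hzeros + hker

/-- Helleseth's power-moment identity:
`∑_{a ∈ F*} ∏_j W_{F,d}(b_j·a) = (q²·N − q^k)/(q − 1)`, where `N` counts the solutions of
`b_1x_1 + ⋯ + b_kx_k = 0` and `x_1^d + ⋯ + x_k^d = 0`. -/
theorem weilSum_product_moment (F : Type*) [Field F] [Fintype F] [DecidableEq F]
    (p : ℕ) [Fact p.Prime] [CharP F p] (d : ℕ) (hd : 0 < d)
    (hgcd : Nat.gcd d (Fintype.card F - 1) = 1)
    (k : ℕ) (hk : 0 < k) (b : Fin k → F) (hb : ∀ j, b j ≠ 0) :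
    ∑ a ∈ Finset.univ.filter (fun a : F => a ≠ 0), ∏ j, weilSum F p d (b j * a) =
      ((Fintype.card F : ℂ) ^ 2 *
          (Set.ncard {x : Fin k → F | ∑ j, b j * x j = 0 ∧ ∑ j, x j ^ d = 0} : ℂ)
        - (Fintype.card F : ℂ) ^ k) / ((Fintype.card F : ℂ) - 1) :=
  weilSum_product_moment_general F p d hd hgcd k hk b hb
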